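/- arXiv:0908.4407 — 2 statements merged into one kernel-verified Lean document; each statement's English description precedes it below -/
import Mathlib

section
/- For all natural numbers a and b, the disjunctive sum of a copies of nim 2 and b copies of nim 1 is a misère loss for the player to move if and only if either (a = 0 and b is odd) or (a ≥ 1, a is even and b is even). In particular, in the misère game of Nim restricted to heaps of size at most 2, the losing positions are exactly *1 (up to pairs of *1, which cancel) and the sums of a positive even number of copies of *2. -/
/-!
Disjunctive sum is commutative and associative with identity `nim 0` up to extensional
equality of game trees, and extensionally equal games have the same misère outcome. Hence the
options of `a·*2 + b·*1` are, up to that equality, `(a-1)·*2 + (b+1)·*1` and `(a-1)·*2 + b·*1`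
(if `a > 0`) and `a·*2 + (b-1)·*1` (if `b > 0`), and the outcome follows by induction on
`2a + b`.
-/

/-- An impartial game: a position is given by the list of its options
(the positions reachable in one move); both players have the same moves. -/
inductive Game : Type
  | node : List Game → Game

namespace Game

/-- The options of a position. -/
def options : Game → List Game
  | node l => l

/-- Disjunctive sum of two games: a move is made in exactly one component. -/
def add : Game → Game → Game
  | node l, node r =>
      node ((l.attach.map fun x => add x.1 (node r)) ++
            (r.attach.map fun y => add (node l) y.1))
termination_by g h => sizeOf g + sizeOf h
decreasing_by
  · have := List.sizeOf_lt_of_mem x.2; simp_wf; (try simp only [Game.node.sizeOf_spec] at *); omega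
  · have := List.sizeOf_lt_of_mem y.2; simp_wf; (try simp only [Game.node.sizeOf_spec] at *); omega

/-- Misère win (for the player to move): the game has no options,
or some option is a misère loss. -/
def MisereWin : Game → Prop
  | node l => l = [] ∨ ∃ x : {a // a ∈ l}, ¬ MisereWin x.1
decreasing_by
  simp_wf; have := List.sizeOf_lt_of_mem x.2; omega

/-- Misère indistinguishability: adding any game `T` yields the same misère outcome. -/
def Indist (G H : Game) : Prop :=
  ∀ T : Game, MisereWin (add G T) ↔ MisereWin (add H T)

/-- The Nim-heap of size `n`, whose options are `nim 0, …, nim (n-1)`. -/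
def nim : ℕ → Game
  | 0 => node []
  | n + 1 => node ((nim n).options ++ [nim n])

/-- Normal-play win (for the player to move): some option is a normal-play loss.
A player unable to move loses. -/
def NormalWin : Game → Prop
  | node l => ∃ x : {a // a ∈ l}, ¬ NormalWin x.1
decreasing_by
  simp_wf; have := List.sizeOf_lt_of_mem x.2; omega

/-- The Grundy value: the mex of the Grundy values of the options. -/
noncomputable def grundy : Game → ℕ
  | node l => sInf {n : ℕ | ∀ x : {a // a ∈ l}, grundy x.1 ≠ n}
decreasing_by
  simp_wf; have := List.sizeOf_lt_of_mem x.2; omega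

/-- The height of a game: the maximal number of moves in a play from it. -/
def height : Game → ℕ
  | node l => (l.attach.map fun x => height x.1 + 1).foldr max 0
decreasing_by
  simp_wf; have := List.sizeOf_lt_of_mem x.2; omega

/-- A canonical tree: duplicate options are removed, hereditarily. -/
def Canonical : Game → Prop
  | node l => l.Nodup ∧ ∀ x : {a // a ∈ l}, Canonical x.1
decreasing_by
  simp_wf; have := List.sizeOf_lt_of_mem x.2; omega

/-- Extensional (set-theoretic) equality of game trees. -/
def ExtEq : Game → Game → Prop
  | node l, node r =>
      (∀ x : {a // a ∈ l}, ∃ y : {b // b ∈ r}, ExtEq x.1 y.1) ∧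
      (∀ y : {b // b ∈ r}, ∃ x : {a // a ∈ l}, ExtEq x.1 y.1)
termination_by g _ => sizeOf g
decreasing_by
  · have := List.sizeOf_lt_of_mem x.2; simp_wf; (try simp only [Game.node.sizeOf_spec] at *); omega
  · have := List.sizeOf_lt_of_mem x.2; simp_wf; (try simp only [Game.node.sizeOf_spec] at *); omega

/-- The disjunctive sum of `n` copies of a game. -/
def copies : ℕ → Game → Game
  | 0, _ => node []
  | n + 1, g => add g (copies n g)

/-- `G` is a reducer of `H` if `H` is obtained from `G` by adding reversible
moves `R₁, R₂, …`: the options of `H` are those of `G` together with the `Rⱼ`,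
each `Rⱼ` having `G` among its options; when `G` is empty one additionally
requires `H` to be a misère win. -/
def Reducer (G H : Game) : Prop :=
  ∃ Rs : List Game,
    (∀ x, x ∈ H.options ↔ x ∈ G.options ∨ x ∈ Rs) ∧
    (∀ R ∈ Rs, G ∈ R.options) ∧
    (G.options = [] → MisereWin H)

/-- A canonical tree is reduced if its only reducer is itself (as a set of
options) and all of its options are reduced. -/
def Reduced : Game → Prop
  | node l =>
      (∀ G, Reducer G (node l) → ∀ x, x ∈ G.options ↔ x ∈ l) ∧
      ∀ x : {a // a ∈ l}, Reduced x.1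
decreasing_by
  simp_wf; have := List.sizeOf_lt_of_mem x.2; omega

lemma sizeOf_lt_of_mem_options {x G : Game} (h : x ∈ G.options) : sizeOf x < sizeOf G := by
  obtain ⟨l⟩ := G
  have := List.sizeOf_lt_of_mem (show x ∈ l from h)
  simp only [node.sizeOf_spec]
  omega

lemma misereWin_iff (G : Game) :
    MisereWin G ↔ G.options = [] ∨ ∃ x ∈ G.options, ¬ MisereWin x := by
  obtain ⟨l⟩ := G
  rw [MisereWin]
  simp only [options, Subtype.exists, exists_prop]

lemma extEq_iff (G H : Game) :
    ExtEq G H ↔ (∀ x ∈ G.options, ∃ y ∈ H.options, ExtEq x y) ∧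
      (∀ y ∈ H.options, ∃ x ∈ G.options, ExtEq x y) := by
  obtain ⟨l⟩ := G; obtain ⟨r⟩ := H
  rw [ExtEq]
  simp only [options, Subtype.forall, Subtype.exists, exists_prop]

lemma mem_options_add {x G H : Game} :
    x ∈ (add G H).options ↔
      (∃ g ∈ G.options, x = add g H) ∨ ∃ h ∈ H.options, x = add G h := by
  obtain ⟨l⟩ := G; obtain ⟨r⟩ := H
  rw [add]
  simp only [options, List.mem_append, List.mem_map, List.mem_attach, true_and,
    Subtype.exists, exists_prop, eq_comm]

theorem extEq_of_bisim (R : Game → Game → Prop)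
    (hR : ∀ G H, R G H → (∀ x ∈ G.options, ∃ y ∈ H.options, R x y) ∧
      (∀ y ∈ H.options, ∃ x ∈ G.options, R x y)) :
    ∀ {G H : Game}, R G H → ExtEq G H
  | G, H, h => by
    rw [extEq_iff]
    refine ⟨fun x hx => ?_, fun y hy => ?_⟩
    · obtain ⟨y, hy, hxy⟩ := (hR G H h).1 x hx
      exact ⟨y, hy, extEq_of_bisim R hR hxy⟩
    · obtain ⟨x, hx, hxy⟩ := (hR G H h).2 y hy
      exact ⟨x, hx, extEq_of_bisim R hR hxy⟩
termination_by G => sizeOf G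
decreasing_by all_goals exact sizeOf_lt_of_mem_options hx

theorem ExtEq.refl (G : Game) : ExtEq G G :=
  extEq_of_bisim (· = ·)
    (by rintro G _ rfl; exact ⟨fun x hx => ⟨x, hx, rfl⟩, fun x hx => ⟨x, hx, rfl⟩⟩) rfl

theorem ExtEq.symm {G H : Game} (h : ExtEq G H) : ExtEq H G :=
  extEq_of_bisim (fun G H => ExtEq H G) (fun _ _ h => ((extEq_iff _ _).1 h).symm) h

theorem ExtEq.trans {G H K : Game} (h₁ : ExtEq G H) (h₂ : ExtEq H K) : ExtEq G K := by
  refine extEq_of_bisim (fun G K => ∃ H, ExtEq G H ∧ ExtEq H K) ?_ ⟨H, h₁, h₂⟩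
  rintro G K ⟨H, hGH, hHK⟩
  rw [extEq_iff] at hGH hHK
  refine ⟨fun x hx => ?_, fun z hz => ?_⟩
  · obtain ⟨y, hy, hxy⟩ := hGH.1 x hx
    obtain ⟨z, hz, hyz⟩ := hHK.1 y hy
    exact ⟨z, hz, y, hxy, hyz⟩
  · obtain ⟨y, hy, hyz⟩ := hHK.2 z hz
    obtain ⟨x, hx, hxy⟩ := hGH.2 y hy
    exact ⟨x, hx, y, hxy, hyz⟩

theorem ExtEq.add {G G' H H' : Game} (hG : ExtEq G G') (hH : ExtEq H H') :
    ExtEq (add G H) (add G' H') := by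
  refine extEq_of_bisim (fun X Y => ∃ G G' H H', ExtEq G G' ∧ ExtEq H H' ∧
    X = Game.add G H ∧ Y = Game.add G' H') ?_ ⟨G, G', H, H', hG, hH, rfl, rfl⟩
  rintro _ _ ⟨G, G', H, H', hG, hH, rfl, rfl⟩
  obtain ⟨hG₁, hG₂⟩ := (extEq_iff G G').1 hG
  obtain ⟨hH₁, hH₂⟩ := (extEq_iff H H').1 hH
  refine ⟨fun x hx => ?_, fun y hy => ?_⟩
  · rcases mem_options_add.1 hx with ⟨g, hg, rfl⟩ | ⟨h, hh, rfl⟩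
    · obtain ⟨g', hg', he⟩ := hG₁ g hg
      exact ⟨_, mem_options_add.2 (.inl ⟨g', hg', rfl⟩), _, _, _, _, he, hH, rfl, rfl⟩
    · obtain ⟨h', hh', he⟩ := hH₁ h hh
      exact ⟨_, mem_options_add.2 (.inr ⟨h', hh', rfl⟩), _, _, _, _, hG, he, rfl, rfl⟩
  · rcases mem_options_add.1 hy with ⟨g', hg', rfl⟩ | ⟨h', hh', rfl⟩
    · obtain ⟨g, hg, he⟩ := hG₂ g' hg'
      exact ⟨_, mem_options_add.2 (.inl ⟨g, hg, rfl⟩), _, _, _, _, he, hH, rfl, rfl⟩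
    · obtain ⟨h, hh, he⟩ := hH₂ h' hh'
      exact ⟨_, mem_options_add.2 (.inr ⟨h, hh, rfl⟩), _, _, _, _, hG, he, rfl, rfl⟩

theorem extEq_add_comm (G H : Game) : ExtEq (add G H) (add H G) := by
  refine extEq_of_bisim (fun X Y => ∃ G H, X = add G H ∧ Y = add H G) ?_ ⟨G, H, rfl, rfl⟩
  rintro _ _ ⟨G, H, rfl, rfl⟩
  refine ⟨fun x hx => ?_, fun y hy => ?_⟩
  · rcases mem_options_add.1 hx with ⟨g, hg, rfl⟩ | ⟨h, hh, rfl⟩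
    · exact ⟨_, mem_options_add.2 (.inr ⟨g, hg, rfl⟩), g, H, rfl, rfl⟩
    · exact ⟨_, mem_options_add.2 (.inl ⟨h, hh, rfl⟩), G, h, rfl, rfl⟩
  · rcases mem_options_add.1 hy with ⟨h, hh, rfl⟩ | ⟨g, hg, rfl⟩
    · exact ⟨_, mem_options_add.2 (.inr ⟨h, hh, rfl⟩), G, h, rfl, rfl⟩
    · exact ⟨_, mem_options_add.2 (.inl ⟨g, hg, rfl⟩), g, H, rfl, rfl⟩

theorem extEq_add_assoc (G H K : Game) : ExtEq (add (add G H) K) (add G (add H K)) := by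
  refine extEq_of_bisim (fun X Y => ∃ G H K, X = add (add G H) K ∧ Y = add G (add H K)) ?_
    ⟨G, H, K, rfl, rfl⟩
  rintro _ _ ⟨G, H, K, rfl, rfl⟩
  refine ⟨fun x hx => ?_, fun y hy => ?_⟩
  · rcases mem_options_add.1 hx with ⟨w, hw, rfl⟩ | ⟨k, hk, rfl⟩
    · rcases mem_options_add.1 hw with ⟨g, hg, rfl⟩ | ⟨h, hh, rfl⟩
      · exact ⟨_, mem_options_add.2 (.inl ⟨g, hg, rfl⟩), g, H, K, rfl, rfl⟩
      · exact ⟨_, mem_options_add.2 (.inr ⟨_, mem_options_add.2 (.inl ⟨h, hh, rfl⟩), rfl⟩),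
          G, h, K, rfl, rfl⟩
    · exact ⟨_, mem_options_add.2 (.inr ⟨_, mem_options_add.2 (.inr ⟨k, hk, rfl⟩), rfl⟩),
        G, H, k, rfl, rfl⟩
  · rcases mem_options_add.1 hy with ⟨g, hg, rfl⟩ | ⟨w, hw, rfl⟩
    · exact ⟨_, mem_options_add.2 (.inl ⟨_, mem_options_add.2 (.inl ⟨g, hg, rfl⟩), rfl⟩),
        g, H, K, rfl, rfl⟩
    · rcases mem_options_add.1 hw with ⟨h, hh, rfl⟩ | ⟨k, hk, rfl⟩
      · exact ⟨_, mem_options_add.2 (.inl ⟨_, mem_options_add.2 (.inr ⟨h, hh, rfl⟩), rfl⟩),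
          G, h, K, rfl, rfl⟩
      · exact ⟨_, mem_options_add.2 (.inr ⟨k, hk, rfl⟩), G, H, k, rfl, rfl⟩

theorem extEq_nim_zero_add (G : Game) : ExtEq (add (nim 0) G) G := by
  refine extEq_of_bisim (fun X Y => X = add (nim 0) Y) ?_ rfl
  rintro _ H rfl
  refine ⟨fun x hx => ?_, fun y hy => ⟨_, mem_options_add.2 (.inr ⟨y, hy, rfl⟩), rfl⟩⟩
  rcases mem_options_add.1 hx with ⟨g, hg, -⟩ | ⟨h, hh, rfl⟩
  · cases hg
  · exact ⟨h, hh, rfl⟩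

theorem misereWin_congr : ∀ {G H : Game}, ExtEq G H → (MisereWin G ↔ MisereWin H)
  | G, H, h => by
    obtain ⟨hGH, hHG⟩ := (extEq_iff G H).1 h
    rw [misereWin_iff G, misereWin_iff H]
    refine or_congr ⟨fun hG => ?_, fun hH => ?_⟩ ⟨?_, ?_⟩
    · exact List.eq_nil_iff_forall_not_mem.2 fun y hy => by simpa [hG] using hHG y hy
    · exact List.eq_nil_iff_forall_not_mem.2 fun x hx => by simpa [hH] using hGH x hx
    · rintro ⟨x, hx, hlose⟩
      obtain ⟨y, hy, hxy⟩ := hGH x hx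
      exact ⟨y, hy, (misereWin_congr hxy).not.1 hlose⟩
    · rintro ⟨y, hy, hlose⟩
      obtain ⟨x, hx, hxy⟩ := hHG y hy
      exact ⟨x, hx, (misereWin_congr hxy).not.2 hlose⟩
termination_by G => sizeOf G
decreasing_by all_goals exact sizeOf_lt_of_mem_options hx

theorem misereWin_add_iff (G H : Game) :
    MisereWin (add G H) ↔ (G.options = [] ∧ H.options = []) ∨
      (∃ g ∈ G.options, ¬ MisereWin (add g H)) ∨ ∃ h ∈ H.options, ¬ MisereWin (add G h) := by
  rw [misereWin_iff]
  refine or_congr ?_ ?_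
  · simp only [List.eq_nil_iff_forall_not_mem, mem_options_add]
    grind
  · simp only [mem_options_add]
    grind

@[simp] lemma options_copies_zero (g : Game) : (copies 0 g).options = [] := rfl

lemma add_mem_options_copies_succ {g u : Game} (hu : u ∈ g.options) (n : ℕ) :
    add u (copies n g) ∈ (copies (n + 1) g).options :=
  mem_options_add.2 (.inl ⟨u, hu, rfl⟩)

lemma exists_extEq_of_mem_options_copies_succ (g : Game) :
    ∀ (n : ℕ), ∀ x ∈ (copies (n + 1) g).options,
      ∃ u ∈ g.options, ExtEq x (add u (copies n g))
  | 0, x, hx => by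
    rcases mem_options_add.1 hx with ⟨u, hu, rfl⟩ | ⟨y, hy, -⟩
    · exact ⟨u, hu, .refl _⟩
    · cases hy
  | n + 1, x, hx => by
    rcases mem_options_add.1 hx with ⟨u, hu, rfl⟩ | ⟨y, hy, rfl⟩
    · exact ⟨u, hu, .refl _⟩
    obtain ⟨u, hu, hy⟩ := exists_extEq_of_mem_options_copies_succ g n y hy
    refine ⟨u, hu, ((ExtEq.refl g).add hy).trans ?_⟩
    exact (extEq_add_assoc g u _).symm.trans
      (((extEq_add_comm g u).add (.refl _)).trans (extEq_add_assoc u g _))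

lemma exists_mem_options_copies_succ_iff {P : Game → Prop}
    (hP : ∀ {x y}, ExtEq x y → (P x ↔ P y)) (g : Game) (n : ℕ) :
    (∃ x ∈ (copies (n + 1) g).options, P x) ↔ ∃ u ∈ g.options, P (add u (copies n g)) := by
  constructor
  · rintro ⟨x, hx, hPx⟩
    obtain ⟨u, hu, hxu⟩ := exists_extEq_of_mem_options_copies_succ g n x hx
    exact ⟨u, hu, (hP hxu).1 hPx⟩
  · rintro ⟨u, hu, hPu⟩
    exact ⟨_, add_mem_options_copies_succ hu n, hPu⟩

lemma options_copies_succ_ne_nil {g : Game} (hg : g.options ≠ []) (n : ℕ) :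
    (copies (n + 1) g).options ≠ [] := by
  obtain ⟨u, hu⟩ := List.exists_mem_of_ne_nil _ hg
  exact List.ne_nil_of_mem (add_mem_options_copies_succ hu n)

lemma exists_not_misereWin_add_nim_two_move (a : ℕ) (B : Game) :
    (∃ x ∈ (copies (a + 1) (nim 2)).options, ¬ MisereWin (add x B)) ↔
      ¬ MisereWin (add (copies a (nim 2)) B) ∨
        ¬ MisereWin (add (copies a (nim 2)) (add (nim 1) B)) := by
  rw [exists_mem_options_copies_succ_iff (fun h => (misereWin_congr (h.add (.refl B))).not)]
  simp only [show (nim 2).options = [nim 0, nim 1] from rfl, List.mem_cons, List.not_mem_nil,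
    or_false, exists_eq_or_imp, exists_eq_left]
  rw [misereWin_congr ((extEq_nim_zero_add (copies a (nim 2))).add (.refl B)),
    misereWin_congr
      (((extEq_add_comm (nim 1) _).add (.refl B)).trans (extEq_add_assoc _ _ _))]

lemma exists_not_misereWin_add_nim_one_move (A : Game) (b : ℕ) :
    (∃ y ∈ (copies (b + 1) (nim 1)).options, ¬ MisereWin (add A y)) ↔
      ¬ MisereWin (add A (copies b (nim 1))) := by
  rw [exists_mem_options_copies_succ_iff
    (fun h => (misereWin_congr ((ExtEq.refl A).add h)).not)]
  simp only [show (nim 1).options = [nim 0] from rfl, List.mem_singleton, exists_eq_left]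
  rw [misereWin_congr ((ExtEq.refl A).add (extEq_nim_zero_add _))]

abbrev smallNim (a b : ℕ) : Game := add (copies a (nim 2)) (copies b (nim 1))

lemma options_copies_nim_succ_ne_nil (k n : ℕ) : (copies (n + 1) (nim (k + 1))).options ≠ [] :=
  options_copies_succ_ne_nil (by simp [nim, options]) n

lemma misereWin_smallNim_zero_zero : MisereWin (smallNim 0 0) :=
  (misereWin_add_iff _ _).2 (.inl ⟨rfl, rfl⟩)

lemma misereWin_smallNim_zero_succ (b : ℕ) :
    MisereWin (smallNim 0 (b + 1)) ↔ ¬ MisereWin (smallNim 0 b) := by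
  rw [smallNim, misereWin_add_iff, exists_not_misereWin_add_nim_one_move]
  simp [options_copies_nim_succ_ne_nil]

lemma misereWin_smallNim_succ_zero (a : ℕ) :
    MisereWin (smallNim (a + 1) 0) ↔
      ¬ MisereWin (smallNim a 0) ∨ ¬ MisereWin (smallNim a 1) := by
  rw [smallNim, misereWin_add_iff, or_iff_right (options_copies_nim_succ_ne_nil 1 a ∘ And.left),
    exists_not_misereWin_add_nim_two_move]
  simp only [options_copies_zero, List.not_mem_nil, false_and, exists_false, or_false]
  rfl

lemma misereWin_smallNim_succ_succ (a b : ℕ) :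
    MisereWin (smallNim (a + 1) (b + 1)) ↔ (¬ MisereWin (smallNim a (b + 1)) ∨
      ¬ MisereWin (smallNim a (b + 2))) ∨ ¬ MisereWin (smallNim (a + 1) b) := by
  rw [smallNim, misereWin_add_iff, or_iff_right (options_copies_nim_succ_ne_nil 1 a ∘ And.left),
    exists_not_misereWin_add_nim_two_move, exists_not_misereWin_add_nim_one_move]
  rfl

end Game

open Game in
/-- The sum of `a` copies of `nim 2` and `b` copies of `nim 1`
is a misère loss for the player to move iff either `a = 0` and `b` is odd, or
`a ≥ 1`, `a` is even and `b` is even. -/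
theorem stmt10 (a b : ℕ) :
    (¬ MisereWin (add (copies a (nim 2)) (copies b (nim 1)))) ↔
      ((a = 0 ∧ Odd b) ∨ (1 ≤ a ∧ Even a ∧ Even b)) := by
  match a, b with
  | 0, 0 => simp [misereWin_smallNim_zero_zero]
  | 0, b + 1 =>
    rw [misereWin_smallNim_zero_succ, not_not, ← not_iff_not, stmt10 0 b]
    grind
  | a + 1, 0 =>
    rw [misereWin_smallNim_succ_zero, stmt10 a 0, stmt10 a 1]
    grind
  | a + 1, b + 1 =>
    rw [misereWin_smallNim_succ_succ, stmt10 a (b + 1), stmt10 a (b + 2), stmt10 (a + 1) b]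
    grind
termination_by 2 * a + b
end

section
/- Every impartial game in which every play lasts at most 3 moves (i.e., every game tree of height at most 3) is misère-indistinguishable from exactly one of the following five games: the empty game 0, nim 1, nim 2, nim 3, and the game {*2} whose unique option is nim 2; moreover these five games are pairwise misère-distinguishable. In other words, there are exactly 5 reduced canonical trees of height at most 3. -/
/-!
Misère indistinguishability is a congruence for the option lists of a game, and adding
reversible moves (a reducer) does not change the class of a game. Hence, if every option
of `G` is indistinguishable from one of a list `reps` of representatives, `G` is
indistinguishable from the game whose options are the representatives it hits. Inductively
the games of height at most `2` reduce to `0, *1, *2`, so those of height at most `3` reduce to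
the eight subsets of `{0, *1, *2}`: five of them are `0, *1, *2, *3, {*2}` themselves, and the
other three are removed by reversible moves, `{*1} ≡ {*1, *2} ≡ 0` and `{0, *2} ≡ *1`.
The five games are told apart by adding `0`, `*2`, `*3` or `{*2}`.
-/

theorem List.foldr_max_le_iff {α : Type*} [LinearOrder α] {L : List α} {b n : α} :
    L.foldr max b ≤ n ↔ b ≤ n ∧ ∀ a ∈ L, a ≤ n := by
  induction L with
  | nil => simp
  | cons a L ih => simp [ih, and_left_comm]

namespace Game

theorem ind (P : Game → Prop) (h : ∀ l : List Game, (∀ x ∈ l, P x) → P (node l)) :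
    ∀ g, P g
  | node l => h l (fun x _ => ind P h x)

@[simp] theorem options_node (l : List Game) : options (node l) = l := rfl

theorem nim_one : nim 1 = node [node []] := rfl

theorem nim_two : nim 2 = node [node [], nim 1] := rfl

theorem nim_three : nim 3 = node [node [], nim 1, nim 2] := rfl

theorem add_node (l r : List Game) :
    add (node l) (node r) =
      node ((l.map fun x => add x (node r)) ++ (r.map fun y => add (node l) y)) := by
  rw [add]
  simp

theorem misereWin_node_iff (l : List Game) :
    MisereWin (node l) ↔ l = [] ∨ ∃ x ∈ l, ¬ MisereWin x := by
  rw [MisereWin]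
  simp

theorem misereWin_add_node_iff (l r : List Game) :
    MisereWin (add (node l) (node r)) ↔
      (l = [] ∧ r = []) ∨ (∃ x ∈ l, ¬ MisereWin (add x (node r))) ∨
        ∃ y ∈ r, ¬ MisereWin (add (node l) y) := by
  simp [add_node, misereWin_node_iff, or_and_right, exists_or]

theorem misereWin_add_nil_iff (g : Game) : MisereWin (add g (node [])) ↔ MisereWin g := by
  induction g using Game.ind with
  | _ l ih =>
    rw [misereWin_add_node_iff, misereWin_node_iff]
    simp only [and_true, List.not_mem_nil, false_and, exists_false, or_false]
    exact or_congr Iff.rfl (exists_congr fun x => and_congr_right fun hx => (ih x hx).not)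

theorem misereWin_add_of_mem_options {G R : Game} (hG : G ∈ R.options) (T : Game)
    (hR : ¬ MisereWin (add R T)) : MisereWin (add G T) := by
  obtain ⟨rl⟩ := R
  obtain ⟨tl⟩ := T
  rw [misereWin_add_node_iff] at hR
  push Not at hR
  exact hR.2.1 G hG

namespace Indist

theorem refl (g : Game) : Indist g g := fun _ => Iff.rfl

theorem symm {g h : Game} (H : Indist g h) : Indist h g := fun T => (H T).symm

theorem trans {g h k : Game} (H₁ : Indist g h) (H₂ : Indist h k) : Indist g k :=
  fun T => (H₁ T).trans (H₂ T)

theorem node_congr {l m : List Game} (hlm : ∀ x ∈ l, ∃ y ∈ m, Indist x y)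
    (hml : ∀ y ∈ m, ∃ x ∈ l, Indist x y) : Indist (node l) (node m) := by
  intro T
  induction T using Game.ind with
  | _ t ih =>
    rw [misereWin_add_node_iff, misereWin_add_node_iff]
    have hl : l = [] ↔ m = [] := by
      simp only [List.eq_nil_iff_forall_not_mem]
      exact ⟨fun h y hy => let ⟨x, hx, _⟩ := hml y hy; h x hx,
        fun h x hx => let ⟨y, hy, _⟩ := hlm x hx; h y hy⟩
    refine or_congr (and_congr_left' hl) (or_congr ⟨?_, ?_⟩ ?_)
    · rintro ⟨x, hx, hwx⟩
      obtain ⟨y, hy, hxy⟩ := hlm x hx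
      exact ⟨y, hy, (hxy (node t)).not.1 hwx⟩
    · rintro ⟨y, hy, hwy⟩
      obtain ⟨x, hx, hxy⟩ := hml y hy
      exact ⟨x, hx, (hxy (node t)).not.2 hwy⟩
    · exact exists_congr fun y => and_congr_right fun hy => (ih y hy).not

end Indist

theorem Reducer.indist {G H : Game} (h : Reducer G H) : Indist G H := by
  obtain ⟨Rs, hmem, hrev, hwin⟩ := h
  obtain ⟨gl⟩ := G
  obtain ⟨hl⟩ := H
  simp only [options_node] at hmem hwin
  intro T
  induction T using Game.ind with
  | _ t ih =>
    constructor
    · rw [misereWin_add_node_iff, misereWin_add_node_iff]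
      rintro (⟨rfl, rfl⟩ | ⟨x, hx, hwx⟩ | ⟨y, hy, hwy⟩)
      · exact (misereWin_add_node_iff _ _).1 ((misereWin_add_nil_iff _).2 (hwin rfl))
      · exact Or.inr (Or.inl ⟨x, (hmem x).2 (Or.inl hx), hwx⟩)
      · exact Or.inr (Or.inr ⟨y, hy, fun w => hwy ((ih y hy).2 w)⟩)
    · rw [misereWin_add_node_iff]
      rintro (⟨hnil, rfl⟩ | ⟨x, hx, hwx⟩ | ⟨y, hy, hwy⟩)
      · have : gl = [] := List.eq_nil_iff_forall_not_mem.2 fun x hx => by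
          simpa [hnil] using (hmem x).2 (Or.inl hx)
        exact (misereWin_add_node_iff _ _).2 (Or.inl ⟨this, rfl⟩)
      · rcases (hmem x).1 hx with hxg | hxR
        · exact (misereWin_add_node_iff _ _).2 (Or.inr (Or.inl ⟨x, hxg, hwx⟩))
        · -- a reversible move is answered by reversing it back to `G`
          exact misereWin_add_of_mem_options (hrev x hxR) _ hwx
      · exact (misereWin_add_node_iff _ _).2
          (Or.inr (Or.inr ⟨y, hy, fun w => hwy ((ih y hy).1 w)⟩))

theorem height_node_le_succ_iff {l : List Game} {n : ℕ} :
    height (node l) ≤ n + 1 ↔ ∀ x ∈ l, height x ≤ n := by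
  rw [height]
  simp [List.foldr_max_le_iff]

theorem eq_nil_of_height_le_zero {g : Game} (h : height g ≤ 0) : g = node [] := by
  obtain ⟨_ | ⟨x, l⟩⟩ := g
  · rfl
  · rw [height] at h
    simp at h

theorem indist_node_filter {reps l : List Game} [DecidablePred fun r => ∃ x ∈ l, Indist x r]
    (h : ∀ x ∈ l, ∃ r ∈ reps, Indist x r) :
    Indist (node l) (node (reps.filter fun r => decide (∃ x ∈ l, Indist x r))) := by
  refine Indist.node_congr (fun x hx => ?_) (fun r hr => ?_)
  · obtain ⟨r, hr, hxr⟩ := h x hx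
    exact ⟨r, List.mem_filter.2 ⟨hr, decide_eq_true ⟨x, hx, hxr⟩⟩, hxr⟩
  · exact of_decide_eq_true (List.mem_filter.1 hr).2

theorem exists_indist_of_height_le_succ {n : ℕ} {reps targets : List Game}
    (hreps : ∀ g, height g ≤ n → ∃ r ∈ reps, Indist g r)
    (htargets : ∀ S ∈ reps.sublists, ∃ t ∈ targets, Indist (node S) t)
    {g : Game} (hg : height g ≤ n + 1) : ∃ t ∈ targets, Indist g t := by
  classical
  obtain ⟨l⟩ := g
  have hl : ∀ x ∈ l, ∃ r ∈ reps, Indist x r :=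
    fun x hx => hreps x (height_node_le_succ_iff.1 hg x hx)
  obtain ⟨t, ht, hSt⟩ := htargets _ (List.mem_sublists.2 List.filter_sublist)
  exact ⟨t, ht, (indist_node_filter hl).trans hSt⟩

theorem indist_nil_node_nim_one : Indist (node []) (node [nim 1]) :=
  Reducer.indist ⟨[nim 1], by simp, by simp [nim_one],
    fun _ => (misereWin_node_iff _).2 (Or.inr ⟨nim 1, by simp, by simp [nim_one, misereWin_node_iff]⟩)⟩

theorem indist_nil_node_nim_one_two : Indist (node []) (node [nim 1, nim 2]) :=
  Reducer.indist ⟨[nim 1, nim 2], by simp, by simp [nim_one, nim_two],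
    fun _ => (misereWin_node_iff _).2 (Or.inr ⟨nim 1, by simp, by simp [nim_one, misereWin_node_iff]⟩)⟩

theorem indist_nim_one_node_nil_two : Indist (nim 1) (node [node [], nim 2]) :=
  Reducer.indist ⟨[nim 2], by simp [nim_one], by simp [nim_two], by simp [nim_one]⟩

theorem exists_indist_of_height_le_zero {g : Game} (hg : height g ≤ 0) :
    ∃ r ∈ [node []], Indist g r :=
  ⟨node [], List.mem_singleton_self _, eq_nil_of_height_le_zero hg ▸ Indist.refl _⟩

theorem exists_indist_of_height_le_one {g : Game} (hg : height g ≤ 1) :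
    ∃ r ∈ [node [], nim 1], Indist g r := by
  refine exists_indist_of_height_le_succ (fun _ => exists_indist_of_height_le_zero) ?_ hg
  intro S hS
  simp only [List.sublists, List.foldr_cons, List.foldr_nil, List.flatMap_cons, List.flatMap_nil,
    List.append_nil, List.mem_cons, List.not_mem_nil, or_false] at hS
  rcases hS with rfl | rfl
  · exact ⟨node [], by simp, Indist.refl _⟩
  · exact ⟨nim 1, by simp, Indist.refl _⟩

theorem exists_indist_of_height_le_two {g : Game} (hg : height g ≤ 2) :
    ∃ r ∈ [node [], nim 1, nim 2], Indist g r := by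
  refine exists_indist_of_height_le_succ (fun _ => exists_indist_of_height_le_one) ?_ hg
  intro S hS
  simp only [List.sublists, List.foldr_cons, List.foldr_nil, List.flatMap_cons, List.flatMap_nil,
    List.append_nil, List.cons_append, List.nil_append, List.mem_cons, List.not_mem_nil, or_false] at hS
  rcases hS with rfl | rfl | rfl | rfl
  · exact ⟨node [], by simp, Indist.refl _⟩
  · exact ⟨nim 1, by simp, Indist.refl _⟩
  · exact ⟨node [], by simp, indist_nil_node_nim_one.symm⟩
  · exact ⟨nim 2, by simp, Indist.refl _⟩

theorem exists_indist_of_height_le_three {g : Game} (hg : height g ≤ 3) :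
    ∃ r ∈ [node [], nim 1, nim 2, nim 3, node [nim 2]], Indist g r := by
  refine exists_indist_of_height_le_succ (fun _ => exists_indist_of_height_le_two) ?_ hg
  intro S hS
  simp only [List.sublists, List.foldr_cons, List.foldr_nil, List.flatMap_cons, List.flatMap_nil,
    List.append_nil, List.cons_append, List.nil_append, List.mem_cons, List.not_mem_nil, or_false] at hS
  rcases hS with rfl | rfl | rfl | rfl | rfl | rfl | rfl | rfl
  · exact ⟨node [], by simp, Indist.refl _⟩
  · exact ⟨nim 1, by simp, Indist.refl _⟩
  · exact ⟨node [], by simp, indist_nil_node_nim_one.symm⟩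
  · exact ⟨nim 2, by simp, Indist.refl _⟩
  · exact ⟨node [nim 2], by simp, Indist.refl _⟩
  · exact ⟨nim 1, by simp, indist_nim_one_node_nil_two.symm⟩
  · exact ⟨node [], by simp, indist_nil_node_nim_one_two.symm⟩
  · exact ⟨nim 3, by simp, Indist.refl _⟩

theorem pairwise_distinguishable_height_le_three_classes :
    [node [], nim 1, nim 2, nim 3, node [nim 2]].Pairwise
      fun r r' => ∃ T, ¬ (MisereWin (add r T) ↔ MisereWin (add r' T)) := by
  simp only [List.pairwise_cons, List.mem_cons, List.not_mem_nil, forall_eq_or_imp, or_false,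
    forall_eq, List.Pairwise.nil, false_imp_iff, implies_true, and_true]
  refine ⟨⟨⟨node [], ?_⟩, ⟨nim 2, ?_⟩, ⟨nim 3, ?_⟩, ⟨node [], ?_⟩⟩,
    ⟨⟨node [], ?_⟩, ⟨node [], ?_⟩, ⟨node [nim 2], ?_⟩⟩, ⟨⟨nim 2, ?_⟩, ⟨node [], ?_⟩⟩,
    ⟨node [], ?_⟩⟩ <;>
  simp [nim_one, nim_two, nim_three, add_node, misereWin_node_iff]

end Game

open Game in
/-- Every impartial game of height at most 3 is
misère-indistinguishable from exactly one of the five games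
`0, *1, *2, *3, {*2}`, and these five games are pairwise
misère-distinguishable: there are exactly 5 reduced canonical trees of
height at most 3. -/
theorem stmt17 :
    (∀ g : Game, height g ≤ 3 →
      ∃! r : Game,
        r ∈ ([Game.node [], nim 1, nim 2, nim 3, Game.node [nim 2]] : List Game) ∧
        Indist g r) ∧
    (∀ r ∈ ([Game.node [], nim 1, nim 2, nim 3, Game.node [nim 2]] : List Game),
      ∀ r' ∈ ([Game.node [], nim 1, nim 2, nim 3, Game.node [nim 2]] : List Game),
        r ≠ r' → ∃ T : Game, ¬ (MisereWin (add r T) ↔ MisereWin (add r' T))) := by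
  have : Std.Symm fun r r' : Game => ∃ T, ¬ (MisereWin (add r T) ↔ MisereWin (add r' T)) :=
    ⟨fun _ _ ⟨T, hT⟩ => ⟨T, fun h => hT h.symm⟩⟩
  have distinct := pairwise_distinguishable_height_le_three_classes.forall
  refine ⟨fun g hg => ?_, distinct⟩
  obtain ⟨r, hr, hgr⟩ := exists_indist_of_height_le_three hg
  refine ⟨r, ⟨hr, hgr⟩, fun r' ⟨hr', hgr'⟩ => ?_⟩
  by_contra hne
  obtain ⟨T, hT⟩ := distinct hr' hr hne
  exact hT ((hgr'.symm.trans hgr) T)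
end
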